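/- For strictly positive log-convex θ, the derivative of f(x) = (∑_{k=0}^{Δ-1} θ_{k+1} C(Δ-1,k) x^k)/(∑_{k=0}^{Δ-1} θ_k C(Δ-1,k) x^k) satisfies 0 ≤ f'(x) ≤ (θ_Δ/θ_{Δ-1} − θ_1/θ_0) ψ for all x ≥ 0, where ψ = max_{0 ≤ k ≤ Δ-2} (Δ-1-k) θ_{k+1}/θ_k. -/

import Mathlib

/-!
Write `f = N / D` with `D x = ∑ aₖ xᵏ`, `N x = ∑ bₖ xᵏ`, `aₖ = θₖ Cₖ`, `bₖ = θₖ₊₁ Cₖ` and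
`Cₖ = (Δ-1).choose k`. Symmetrizing the double sum `N' D - N D'` gives
`∑_{j<i} (bᵢ aⱼ - bⱼ aᵢ) (i - j) x^(i+j-1)`. Log-convexity makes the ratios `rₖ = θₖ₊₁ / θₖ`
nondecreasing, and `bᵢ aⱼ - bⱼ aᵢ = Cᵢ Cⱼ θᵢ θⱼ (rᵢ - rⱼ)` with `0 ≤ rᵢ - rⱼ ≤ r_{Δ-1} - r₀`: this
gives `f' ≥ 0`. For the upper bound, `(i - j) Cᵢ θᵢ ≤ i Cᵢ θᵢ = (Δ - i) Cᵢ₋₁ θᵢ ≤ ψ Cᵢ₋₁ θᵢ₋₁`, so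
the `(i, j)` term is at most `(r_{Δ-1} - r₀) ψ aᵢ₋₁ xⁱ⁻¹ aⱼ xʲ`, and these terms, indexed by
pairs `j ≤ i - 1`, sum to at most `(r_{Δ-1} - r₀) ψ D²`.
-/

open Finset

-- The truncated exponents `i - 1` and `i + j - 1` only misbehave where their coefficients vanish.
theorem natCast_mul_pow_pred_mul_pow_sub {R : Type*} [CommRing R] (x : R) (i j : ℕ) :
    (i : R) * x ^ (i - 1) * x ^ j - j * x ^ (j - 1) * x ^ i = (i - j) * x ^ (i + j - 1) := by
  rcases i with _ | i <;> rcases j with _ | j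
  · simp
  · simp; ring
  · simp
  · rw [show i + 1 + (j + 1) - 1 = i + 1 + j by omega]
    simp only [Nat.add_sub_cancel, pow_succ, pow_add]
    push_cast
    ring

theorem sum_range_sum_range_eq_sum_lt_add_sum_diag {M : Type*} [AddCommMonoid M] (n : ℕ)
    (F : ℕ → ℕ → M) :
    ∑ i ∈ range n, ∑ j ∈ range n, F i j
      = ∑ i ∈ range n, ∑ j ∈ range i, (F i j + F j i) + ∑ i ∈ range n, F i i := by
  induction n with
  | zero => simp
  | succ n ih =>
    simp only [sum_range_succ, sum_add_distrib, ih]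
    abel

section Wronskian

variable {R : Type*} [CommRing R]

def sumPowWronskian (a b : ℕ → R) (m : ℕ) (x : R) : R :=
  ∑ i ∈ range m, ∑ j ∈ range i, (b i * a j - b j * a i) * ((i - j) * x ^ (i + j - 1))

theorem sum_pow_deriv_mul_sub_eq_sumPowWronskian (a b : ℕ → R) (m : ℕ) (x : R) :
    (∑ i ∈ range m, b i * (i * x ^ (i - 1))) * (∑ j ∈ range m, a j * x ^ j)
      - (∑ i ∈ range m, b i * x ^ i) * (∑ j ∈ range m, a j * (j * x ^ (j - 1)))
      = sumPowWronskian a b m x := by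
  simp only [sumPowWronskian, sum_mul_sum, ← sum_sub_distrib]
  rw [sum_range_sum_range_eq_sum_lt_add_sum_diag, add_eq_left.mpr (sum_eq_zero fun i _ => by ring)]
  refine sum_congr rfl fun i _ => sum_congr rfl fun j _ => ?_
  rw [← natCast_mul_pow_pred_mul_pow_sub]
  ring

end Wronskian

theorem sum_triangle_le_mul_sq (m : ℕ) (a : ℕ → ℝ) (T : ℕ → ℕ → ℝ) {K : ℝ} (hK : 0 ≤ K)
    (ha : ∀ k < m, 0 ≤ a k) (hT : ∀ i < m, ∀ j < i, T i j ≤ K * (a (i - 1) * a j)) :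
    ∑ i ∈ range m, ∑ j ∈ range i, T i j ≤ K * (∑ k ∈ range m, a k) ^ 2 := by
  have hterm : ∀ q < m, ∀ j < m, 0 ≤ K * (a q * a j) := fun q hq j hj =>
    mul_nonneg hK (mul_nonneg (ha q hq) (ha j hj))
  rcases m with _ | m
  · simp
  calc ∑ i ∈ range (m + 1), ∑ j ∈ range i, T i j
      ≤ ∑ q ∈ range m, ∑ j ∈ range (q + 1), K * (a q * a j) := by
        rw [sum_range_succ', sum_range_zero, add_zero]
        gcongr with q hq j hj
        exact hT (q + 1) (by simpa using hq) j (mem_range.mp hj)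
    _ ≤ ∑ q ∈ range m, ∑ j ∈ range (m + 1), K * (a q * a j) := by
        refine sum_le_sum fun q hq => ?_
        have hq : q < m := mem_range.mp hq
        exact sum_le_sum_of_subset_of_nonneg (range_subset_range.mpr (by omega)) fun j hj _ =>
          hterm q (by omega) j (mem_range.mp hj)
    _ ≤ ∑ q ∈ range (m + 1), ∑ j ∈ range (m + 1), K * (a q * a j) :=
        sum_le_sum_of_subset_of_nonneg (by simp) fun q hq _ =>
          sum_nonneg fun j hj => hterm q (mem_range.mp hq) j (mem_range.mp hj)
    _ = K * (∑ k ∈ range (m + 1), a k) ^ 2 := by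
        rw [sq, sum_mul_sum, mul_sum]; simp_rw [mul_sum]

theorem deriv_sum_pow_div_sum_pow (a b : ℕ → ℝ) (m : ℕ) {x : ℝ}
    (hx : ∑ k ∈ range m, a k * x ^ k ≠ 0) :
    deriv (fun y => (∑ k ∈ range m, b k * y ^ k) / ∑ k ∈ range m, a k * y ^ k) x
      = sumPowWronskian a b m x / (∑ k ∈ range m, a k * x ^ k) ^ 2 := by
  have hsum (c : ℕ → ℝ) : HasDerivAt (fun y => ∑ k ∈ range m, c k * y ^ k)
      (∑ k ∈ range m, c k * (k * x ^ (k - 1))) x :=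
    HasDerivAt.fun_sum fun k _ => (hasDerivAt_pow k x).const_mul _
  rw [← sum_pow_deriv_mul_sub_eq_sumPowWronskian]
  exact ((hsum b).div (hsum a) hx).deriv

theorem sumPowWronskian_nonneg (a b : ℕ → ℝ) (m : ℕ) {x : ℝ} (hx : 0 ≤ x)
    (hab : ∀ i < m, ∀ j < i, b j * a i ≤ b i * a j) :
    0 ≤ sumPowWronskian a b m x :=
  sum_nonneg fun i hi => sum_nonneg fun j hj => by
    have hji : j < i := mem_range.mp hj
    have hji' : (j : ℝ) ≤ i := by exact_mod_cast hji.le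
    exact mul_nonneg (sub_nonneg.mpr (hab i (mem_range.mp hi) j hji))
      (mul_nonneg (sub_nonneg.mpr hji') (pow_nonneg hx _))

theorem sumPowWronskian_le (a b : ℕ → ℝ) (m : ℕ) {x : ℝ} (hx : 0 ≤ x) {K : ℝ} (hK : 0 ≤ K)
    (ha : ∀ k < m, 0 ≤ a k)
    (hab : ∀ i < m, ∀ j < i, (b i * a j - b j * a i) * (i - j) ≤ K * (a (i - 1) * a j)) :
    sumPowWronskian a b m x ≤ K * (∑ k ∈ range m, a k * x ^ k) ^ 2 := by
  refine sum_triangle_le_mul_sq m (fun k => a k * x ^ k) _ hK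
    (fun k hk => mul_nonneg (ha k hk) (pow_nonneg hx k)) fun i hi j hj => ?_
  obtain ⟨q, rfl⟩ : ∃ q, i = q + 1 := ⟨i - 1, by omega⟩
  have hpow : x ^ (q + 1 + j - 1) = x ^ q * x ^ j := by
    rw [← pow_add]; congr 1; omega
  calc (b (q + 1) * a j - b j * a (q + 1)) * ((↑(q + 1) - j) * x ^ (q + 1 + j - 1))
      = (b (q + 1) * a j - b j * a (q + 1)) * (↑(q + 1) - j) * (x ^ q * x ^ j) := by
        rw [hpow]; ring
    _ ≤ K * (a (q + 1 - 1) * a j) * (x ^ q * x ^ j) :=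
        mul_le_mul_of_nonneg_right (hab (q + 1) hi j hj)
          (mul_nonneg (pow_nonneg hx q) (pow_nonneg hx j))
    _ = K * (a (q + 1 - 1) * x ^ (q + 1 - 1) * (a j * x ^ j)) := by
        rw [Nat.add_sub_cancel]; ring

section LogConvex

variable {Δ : ℕ} {θ : ℕ → ℝ}

theorem monotoneOn_ratio_of_logConvex
    (hlc : ∀ k, k + 2 ≤ Δ → θ (k + 1) / θ k ≤ θ (k + 2) / θ (k + 1)) :
    MonotoneOn (fun k => θ (k + 1) / θ k) (Set.Iio Δ) :=
  monotoneOn_of_le_succ Set.ordConnected_Iio fun k _ _ hk => by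
    simp only [Order.succ_eq_add_one, Set.mem_Iio] at hk ⊢
    exact hlc k (by omega)

theorem ratio_zero_le_ratio_last_of_logConvex
    (hlc : ∀ k, k + 2 ≤ Δ → θ (k + 1) / θ k ≤ θ (k + 2) / θ (k + 1)) (hΔ : 0 < Δ) :
    θ 1 / θ 0 ≤ θ Δ / θ (Δ - 1) := by
  have h := monotoneOn_ratio_of_logConvex hlc (Set.mem_Iio.mpr hΔ)
    (Set.mem_Iio.mpr (Nat.sub_lt hΔ one_pos)) (Nat.zero_le (Δ - 1))
  simpa only [zero_add, Nat.sub_add_cancel (Nat.one_le_of_lt hΔ)] using h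

theorem binomial_cross_le_of_logConvex (hpos : ∀ k ≤ Δ, 0 < θ k)
    (hlc : ∀ k, k + 2 ≤ Δ → θ (k + 1) / θ k ≤ θ (k + 2) / θ (k + 1)) {i j : ℕ} (hji : j ≤ i)
    (hi : i < Δ) :
    θ (j + 1) * ((Δ - 1).choose j : ℝ) * (θ i * ((Δ - 1).choose i : ℝ))
      ≤ θ (i + 1) * ((Δ - 1).choose i : ℝ) * (θ j * ((Δ - 1).choose j : ℝ)) := by
  have hratio := monotoneOn_ratio_of_logConvex hlc (Set.mem_Iio.mpr (hji.trans_lt hi))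
    (Set.mem_Iio.mpr hi) hji
  rw [div_le_div_iff₀ (hpos j (by omega)) (hpos i (by omega))] at hratio
  calc θ (j + 1) * ((Δ - 1).choose j : ℝ) * (θ i * ((Δ - 1).choose i : ℝ))
      = θ (j + 1) * θ i * (((Δ - 1).choose i : ℝ) * (Δ - 1).choose j) := by ring
    _ ≤ θ (i + 1) * θ j * (((Δ - 1).choose i : ℝ) * (Δ - 1).choose j) := by gcongr
    _ = θ (i + 1) * ((Δ - 1).choose i : ℝ) * (θ j * ((Δ - 1).choose j : ℝ)) := by ring

theorem ratio_gap_le_of_logConvex (hpos : ∀ k ≤ Δ, 0 < θ k)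
    (hlc : ∀ k, k + 2 ≤ Δ → θ (k + 1) / θ k ≤ θ (k + 2) / θ (k + 1)) {i j : ℕ} (hji : j ≤ i)
    (hi : i < Δ) :
    θ (i + 1) * θ j - θ (j + 1) * θ i ≤ (θ Δ / θ (Δ - 1) - θ 1 / θ 0) * (θ i * θ j) := by
  have hmono := monotoneOn_ratio_of_logConvex hlc
  have hup := hmono (Set.mem_Iio.mpr hi) (Set.mem_Iio.mpr (by omega : Δ - 1 < Δ))
    (by omega : i ≤ Δ - 1)
  have hlow := hmono (Set.mem_Iio.mpr (by omega : 0 < Δ)) (Set.mem_Iio.mpr (by omega : j < Δ))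
    (Nat.zero_le j)
  simp only [Nat.sub_add_cancel (by omega : 1 ≤ Δ), zero_add] at hup hlow
  have hθi := hpos i hi.le
  have hθj := hpos j (by omega)
  calc θ (i + 1) * θ j - θ (j + 1) * θ i = (θ (i + 1) / θ i - θ (j + 1) / θ j) * (θ i * θ j) := by
        field_simp
    _ ≤ (θ Δ / θ (Δ - 1) - θ 1 / θ 0) * (θ i * θ j) := by gcongr

theorem binomial_wronskian_coeff_le_of_logConvex (hpos : ∀ k ≤ Δ, 0 < θ k)
    (hlc : ∀ k, k + 2 ≤ Δ → θ (k + 1) / θ k ≤ θ (k + 2) / θ (k + 1)) {ψ : ℝ}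
    (hψ : ∀ k < Δ - 1, ((Δ : ℝ) - 1 - k) * θ (k + 1) / θ k ≤ ψ) {i j : ℕ} (hji : j < i)
    (hi : i < Δ) :
    (θ (i + 1) * ((Δ - 1).choose i : ℝ) * (θ j * ((Δ - 1).choose j : ℝ))
        - θ (j + 1) * ((Δ - 1).choose j : ℝ) * (θ i * ((Δ - 1).choose i : ℝ))) * ((i : ℝ) - j)
      ≤ (θ Δ / θ (Δ - 1) - θ 1 / θ 0) * ψ *
        (θ (i - 1) * ((Δ - 1).choose (i - 1) : ℝ) * (θ j * ((Δ - 1).choose j : ℝ))) := by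
  obtain ⟨q, rfl⟩ : ∃ q, i = q + 1 := ⟨i - 1, by omega⟩
  rw [Nat.add_sub_cancel]
  set R := θ Δ / θ (Δ - 1) - θ 1 / θ 0
  set C : ℕ → ℝ := fun k => ((Δ - 1).choose k : ℝ)
  have hθq := hpos q (by omega)
  have hθq1 := hpos (q + 1) hi.le
  have hθj := hpos j (by omega)
  have hR : 0 ≤ R := sub_nonneg.mpr (ratio_zero_le_ratio_last_of_logConvex hlc (by omega))
  have hji' : (j : ℝ) ≤ q + 1 := by exact_mod_cast hji.le
  have hgap := ratio_gap_le_of_logConvex hpos hlc hji.le hi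
  have hbinom : ((q : ℝ) + 1 - j) * (θ (q + 1) * C (q + 1)) ≤ ψ * (θ q * C q) := by
    have hchoose : C (q + 1) * ((q : ℝ) + 1) = C q * ((Δ : ℝ) - 1 - q) := by
      have h := congrArg (Nat.cast : ℕ → ℝ) (Nat.choose_succ_right_eq (Δ - 1) q)
      push_cast [Nat.cast_sub (show q ≤ Δ - 1 by omega), Nat.cast_sub (show 1 ≤ Δ by omega)] at h
      exact h
    have hψq := hψ q (by omega)
    rw [div_le_iff₀ hθq] at hψq
    calc ((q : ℝ) + 1 - j) * (θ (q + 1) * C (q + 1))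
        ≤ ((q : ℝ) + 1) * (θ (q + 1) * C (q + 1)) := by
          gcongr; linarith [(Nat.cast_nonneg j : (0 : ℝ) ≤ j)]
      _ = ((Δ : ℝ) - 1 - q) * θ (q + 1) * C q := by linear_combination θ (q + 1) * hchoose
      _ ≤ ψ * θ q * C q := by gcongr
      _ = ψ * (θ q * C q) := by ring
  push_cast
  calc (θ (q + 1 + 1) * C (q + 1) * (θ j * C j) - θ (j + 1) * C j * (θ (q + 1) * C (q + 1)))
        * ((q : ℝ) + 1 - j)
      = (θ (q + 1 + 1) * θ j - θ (j + 1) * θ (q + 1))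
          * (C j * (((q : ℝ) + 1 - j) * C (q + 1))) := by ring
    _ ≤ R * (θ (q + 1) * θ j) * (C j * (((q : ℝ) + 1 - j) * C (q + 1))) := by
        gcongr
    _ = R * (θ j * C j) * (((q : ℝ) + 1 - j) * (θ (q + 1) * C (q + 1))) := by ring
    _ ≤ R * (θ j * C j) * (ψ * (θ q * C q)) := by gcongr
    _ = R * ψ * (θ q * C q * (θ j * C j)) := by ring

end LogConvex

theorem stmt_7 (Δ : ℕ) (hΔ : 3 ≤ Δ) (θ : ℕ → ℝ)
    (hpos : ∀ k ≤ Δ, 0 < θ k)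
    (hlc : ∀ k, k + 2 ≤ Δ → θ (k + 1) / θ k ≤ θ (k + 2) / θ (k + 1))
    (x : ℝ) (hx : 0 ≤ x) :
    0 ≤ deriv (fun y : ℝ =>
        (∑ k ∈ Finset.range Δ, θ (k + 1) * ((Δ - 1).choose k : ℝ) * y ^ k) /
          (∑ k ∈ Finset.range Δ, θ k * ((Δ - 1).choose k : ℝ) * y ^ k)) x ∧
      deriv (fun y : ℝ =>
        (∑ k ∈ Finset.range Δ, θ (k + 1) * ((Δ - 1).choose k : ℝ) * y ^ k) /
          (∑ k ∈ Finset.range Δ, θ k * ((Δ - 1).choose k : ℝ) * y ^ k)) x ≤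
      (θ Δ / θ (Δ - 1) - θ 1 / θ 0) *
        (Finset.range (Δ - 1)).sup' (Finset.nonempty_range_iff.mpr (by omega))
          (fun k => ((Δ : ℝ) - 1 - k) * θ (k + 1) / θ k) := by
  set ψ := (Finset.range (Δ - 1)).sup' (Finset.nonempty_range_iff.mpr (by omega))
    (fun k => ((Δ : ℝ) - 1 - k) * θ (k + 1) / θ k)
  have hψ (k : ℕ) (hk : k < Δ - 1) : ((Δ : ℝ) - 1 - k) * θ (k + 1) / θ k ≤ ψ :=
    le_sup' (fun k => ((Δ : ℝ) - 1 - k) * θ (k + 1) / θ k) (mem_range.mpr hk)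
  have hcoeff (k : ℕ) (hk : k < Δ) : 0 ≤ θ k * ((Δ - 1).choose k : ℝ) :=
    mul_nonneg (hpos k hk.le).le (Nat.cast_nonneg _)
  have hD : 0 < ∑ k ∈ range Δ, θ k * ((Δ - 1).choose k : ℝ) * x ^ k := by
    exact sum_pos' (fun k hk => mul_nonneg (hcoeff k (mem_range.mp hk)) (pow_nonneg hx k))
      ⟨0, mem_range.mpr (by omega), by simpa using hpos 0 (by omega)⟩
  have hR : 0 ≤ θ Δ / θ (Δ - 1) - θ 1 / θ 0 :=
    sub_nonneg.mpr (ratio_zero_le_ratio_last_of_logConvex hlc (by omega))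
  have hψ0 : 0 ≤ ψ := by
    have hΔ1 : (0 : ℝ) ≤ (Δ : ℝ) - 1 - (0 : ℕ) := by
      push_cast; linarith [(Nat.ofNat_le_cast.mpr hΔ : (3 : ℝ) ≤ Δ)]
    exact (div_nonneg (mul_nonneg hΔ1 (hpos 1 (by omega)).le) (hpos 0 (by omega)).le).trans
      (hψ 0 (by omega))
  rw [deriv_sum_pow_div_sum_pow _ _ _ hD.ne']
  refine ⟨div_nonneg (sumPowWronskian_nonneg _ _ _ hx fun i hi j hj =>
    binomial_cross_le_of_logConvex hpos hlc hj.le hi) (sq_nonneg _), ?_⟩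
  rw [div_le_iff₀ (pow_pos hD 2)]
  exact sumPowWronskian_le _ _ _ hx (mul_nonneg hR hψ0) hcoeff fun i hi j hj =>
    binomial_wronskian_coeff_le_of_logConvex hpos hlc hψ hj hi
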